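/- arXiv:0902.0722 — 3 statements merged into one kernel-verified Lean document; each statement's English description precedes it below -/
import Mathlib

section
/- Let N ≥ 3, ρ₀ > 0, β > 0, κ > 0, and define W : {x ∈ ℝ^N : |x| > ρ₀} → ℝ by W(x) = |x|^{−(N−2)} ((N−2)β − κ (log(|x|/ρ₀))^{−β}). Then W is of class C² and for every x with |x| > ρ₀ one has −ΔW(x) = κ(N−2)β / (|x|^N (log(|x|/ρ₀))^{1+β}) + κβ(β+1) / (|x|^N (log(|x|/ρ₀))^{2+β}). In particular, if Λ ⊂ ℝ^N is a bounded open set containing the closed ball of radius ρ centered at 0 with ρ > ρ₀, and H is the penalization potential, then −ΔW(x) ≥ H(x)W(x) for every x ∉ Λ, i.e. W is a supersolution of −Δ − H outside Λ. -/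
/-!
Everything is a computation with the radial profile `f(r) = r^{-c} g(ℓ)` of `W`, where
`c = N - 2`, `ℓ = log (r / ρ₀)` and `g(ℓ) = cβ - κ ℓ^{-β}`. For radial functions
`Δ f(|x|) = f'' + (N - 1) f' / r`, which follows from `Δ φ(|x|²) = 4 |x|² φ'' + 2N φ'`
(the square of the norm is smooth). Since `r ∂_r (r^a g(ℓ)) = r^a (a g + g')`, one has
`f' = r^{-c-1} g₁` with `g₁ = g' - c g`, and the radial Laplacian collapses to
`r^{-N} g₁' = r^{-N} (g'' - c g')`, so `-ΔW = r^{-N} (cκβ ℓ^{-β-1} + κβ(β+1) ℓ^{-β-2})`.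
Outside `Λ` we have `ℓ > 0`, and `H W = r^{-N} ℓ^{-1-β} κ (cβ - κ ℓ^{-β})` is at most the first
of these two terms, while the second is nonnegative.
-/

open MeasureTheory Metric Set Filter
open scoped RealInnerProductSpace Topology ENNReal

/-- The Laplacian of `u : ℝ^N → ℝ`: the sum of the second partial derivatives. -/
noncomputable def lap {N : ℕ} (u : EuclideanSpace ℝ (Fin N) → ℝ)
    (x : EuclideanSpace ℝ (Fin N)) : ℝ :=
  ∑ i : Fin N, iteratedFDeriv ℝ 2 u x ![EuclideanSpace.single i 1, EuclideanSpace.single i 1]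

open Classical in
/-- The penalization potential: `H(x) = κ / (|x|² (log(|x|/ρ₀))^{1+β})` outside `Λ`
and `H(x) = 0` on `Λ`. -/
noncomputable def penalPot {N : ℕ} (Λ : Set (EuclideanSpace ℝ (Fin N))) (ρ₀ β κ : ℝ)
    (x : EuclideanSpace ℝ (Fin N)) : ℝ :=
  if x ∈ Λ then 0 else κ / (‖x‖ ^ 2 * Real.log (‖x‖ / ρ₀) ^ (1 + β))

section Laplacian

variable {N : ℕ}

lemma lap_congr {W V : EuclideanSpace ℝ (Fin N) → ℝ} {x : EuclideanSpace ℝ (Fin N)}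
    (h : W =ᶠ[𝓝 x] V) : lap W x = lap V x := by
  simp only [lap, (h.iteratedFDeriv ℝ 2).eq_of_nhds]

lemma lap_comp_norm_sq {φ φ' : ℝ → ℝ} {φ'' : ℝ} {x : EuclideanSpace ℝ (Fin N)}
    (hφ : ∀ᶠ s in 𝓝 (‖x‖ ^ 2), HasDerivAt φ (φ' s) s) (hφ' : HasDerivAt φ' φ'' (‖x‖ ^ 2)) :
    lap (fun y => φ (‖y‖ ^ 2)) x = 4 * φ'' * ‖x‖ ^ 2 + 2 * N * φ' (‖x‖ ^ 2) := by
  have hq (y : EuclideanSpace ℝ (Fin N)) :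
      HasFDerivAt (fun z => ‖z‖ ^ 2) (2 • innerSL ℝ y) y :=
    (hasStrictFDerivAt_norm_sq y).hasFDerivAt
  have hfd : fderiv ℝ (fun y => φ (‖y‖ ^ 2)) =ᶠ[𝓝 x]
      fun y => (2 * φ' (‖y‖ ^ 2)) • innerSL ℝ y := by
    have hcont : Tendsto (fun y : EuclideanSpace ℝ (Fin N) => ‖y‖ ^ 2) (𝓝 x) (𝓝 (‖x‖ ^ 2)) :=
      (continuous_norm.pow 2).continuousAt
    filter_upwards [hcont.eventually hφ] with y hy
    refine ((hy.comp_hasFDerivAt y (hq y)).congr_fderiv ?_).fderiv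
    ext v
    simp only [smul_apply, coe_innerSL_apply, nsmul_eq_mul, smul_eq_mul]
    ring
  have hF : HasFDerivAt (fun y => (2 * φ' (‖y‖ ^ 2)) • innerSL ℝ y) _ x :=
    ((hφ'.comp_hasFDerivAt x (hq x)).const_mul 2).smul (innerSL ℝ).hasFDerivAt
  have hterm (i : Fin N) : iteratedFDeriv ℝ 2 (fun y => φ (‖y‖ ^ 2)) x
      ![EuclideanSpace.single i 1, EuclideanSpace.single i 1] =
        2 * φ' (‖x‖ ^ 2) + 4 * φ'' * x i ^ 2 := by
    rw [iteratedFDeriv_two_apply, hfd.fderiv_eq, hF.fderiv]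
    simp only [Function.comp_apply, Matrix.cons_val_zero, Matrix.cons_val_one,
      Matrix.cons_val_fin_one, add_apply, smul_apply,
      ContinuousLinearMap.smulRight_apply, innerSL_apply_apply ℝ, EuclideanSpace.inner_single_right,
      Real.ringHom_apply, inner_self_eq_norm_sq_to_K, PiLp.norm_single, norm_one, nsmul_eq_mul,
      smul_eq_mul]
    ring
  rw [lap, Finset.sum_congr rfl fun i _ => hterm i, Finset.sum_add_distrib, Finset.sum_const,
    Finset.card_univ, Fintype.card_fin, nsmul_eq_mul, ← Finset.mul_sum,
    ← EuclideanSpace.real_norm_sq_eq]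
  ring

lemma lap_comp_norm {f f' : ℝ → ℝ} {f'' : ℝ} {x : EuclideanSpace ℝ (Fin N)} (hx : x ≠ 0)
    (hf : ∀ᶠ r in 𝓝 ‖x‖, HasDerivAt f (f' r) r) (hf' : HasDerivAt f' f'' ‖x‖) :
    lap (fun y => f ‖y‖) x = f'' + (N - 1) / ‖x‖ * f' ‖x‖ := by
  have hr : 0 < ‖x‖ := norm_pos_iff.2 hx
  have hsqrt : √(‖x‖ ^ 2) = ‖x‖ := Real.sqrt_sq hr.le
  have hr2 : ‖x‖ ^ 2 ≠ 0 := by positivity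
  have hcomp : (fun y : EuclideanSpace ℝ (Fin N) => f ‖y‖) = fun y => f √(‖y‖ ^ 2) := by
    simp_rw [Real.sqrt_sq (norm_nonneg _)]
  have hφ : ∀ᶠ s in 𝓝 (‖x‖ ^ 2),
      HasDerivAt (fun s => f √s) (f' √s / (2 * √s)) s := by
    have hcont : Tendsto (√·) (𝓝 (‖x‖ ^ 2)) (𝓝 ‖x‖) := by
      have h := Real.continuous_sqrt.tendsto (‖x‖ ^ 2)
      rwa [hsqrt] at h
    filter_upwards [hcont.eventually hf, eventually_ne_nhds hr2] with s hs hs0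
    exact (hs.comp s (Real.hasDerivAt_sqrt hs0)).congr_deriv (mul_one_div _ _)
  have hφ' : HasDerivAt (fun s => f' √s / (2 * √s)) ((f'' - f' ‖x‖ / ‖x‖) / (4 * ‖x‖ ^ 2))
      (‖x‖ ^ 2) := by
    have hd := Real.hasDerivAt_sqrt hr2
    rw [hsqrt] at hd
    refine ((hsqrt ▸ hf').comp _ hd |>.div (hd.const_mul 2) ?_).congr_deriv ?_
    · simp [hsqrt, hr.ne']
    · simp only [Function.comp_apply, hsqrt]
      field_simp
      ring
  rw [hcomp, lap_comp_norm_sq hφ hφ', hsqrt]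
  field_simp
  ring

end Laplacian

lemma hasDerivAt_rpow_mul_comp_log_div {g : ℝ → ℝ} {g' a ρ₀ r : ℝ} (hρ₀ : ρ₀ ≠ 0) (hr : r ≠ 0)
    (hg : HasDerivAt g g' (Real.log (r / ρ₀))) :
    HasDerivAt (fun r => r ^ a * g (Real.log (r / ρ₀)))
      (r ^ (a - 1) * (a * g (Real.log (r / ρ₀)) + g')) r := by
  have hlog : HasDerivAt (fun r => Real.log (r / ρ₀)) r⁻¹ r := by
    refine (((hasDerivAt_id r).div_const ρ₀).log (div_ne_zero hr hρ₀)).congr_deriv ?_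
    simp only [id]
    field_simp
  refine ((Real.hasDerivAt_rpow_const (Or.inl hr)).mul (hg.comp r hlog)).congr_deriv ?_
  rw [Function.comp_apply, Real.rpow_sub_one hr]
  field_simp

section Profile

variable {ρ₀ β κ c r : ℝ}

lemma hasDerivAt_profile (hρ₀ : 0 < ρ₀) (hr : ρ₀ < r) :
    HasDerivAt (fun r => r ^ (-c) * (c * β - κ * Real.log (r / ρ₀) ^ (-β)))
      (r ^ (-c - 1) * (-c * (c * β - κ * Real.log (r / ρ₀) ^ (-β))
        + κ * β * Real.log (r / ρ₀) ^ (-β - 1))) r := by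
  have hℓ : 0 < Real.log (r / ρ₀) := Real.log_pos ((one_lt_div hρ₀).2 hr)
  refine hasDerivAt_rpow_mul_comp_log_div (g := fun ℓ => c * β - κ * ℓ ^ (-β)) hρ₀.ne'
    (hρ₀.trans hr).ne' ?_
  refine (((Real.hasDerivAt_rpow_const (Or.inl hℓ.ne')).const_mul κ).const_sub _).congr_deriv ?_
  ring

lemma hasDerivAt_profile_deriv (hρ₀ : 0 < ρ₀) (hr : ρ₀ < r) :
    HasDerivAt (fun r => r ^ (-c - 1) * (-c * (c * β - κ * Real.log (r / ρ₀) ^ (-β))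
        + κ * β * Real.log (r / ρ₀) ^ (-β - 1)))
      (r ^ (-c - 2) * ((-c - 1) * (-c * (c * β - κ * Real.log (r / ρ₀) ^ (-β))
        + κ * β * Real.log (r / ρ₀) ^ (-β - 1))
        - c * κ * β * Real.log (r / ρ₀) ^ (-β - 1)
        - κ * β * (β + 1) * Real.log (r / ρ₀) ^ (-β - 2))) r := by
  have hℓ : 0 < Real.log (r / ρ₀) := Real.log_pos ((one_lt_div hρ₀).2 hr)
  have h := hasDerivAt_rpow_mul_comp_log_div (a := -c - 1)
    (g := fun ℓ => -c * (c * β - κ * ℓ ^ (-β)) + κ * β * ℓ ^ (-β - 1)) hρ₀.ne' (hρ₀.trans hr).ne'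
    ((((Real.hasDerivAt_rpow_const (Or.inl hℓ.ne')).const_mul κ).const_sub (c * β)).const_mul (-c)
      |>.add ((Real.hasDerivAt_rpow_const (Or.inl hℓ.ne')).const_mul (κ * β)))
  rw [show -c - 1 - 1 = -c - 2 by ring] at h
  refine h.congr_deriv ?_
  rw [show -β - 1 - 1 = -β - 2 by ring]
  ring

lemma contDiffAt_profile {n : WithTop ℕ∞} (hρ₀ : 0 < ρ₀) (hr : ρ₀ < r) :
    ContDiffAt ℝ n (fun r => r ^ (-c) * (c * β - κ * Real.log (r / ρ₀) ^ (-β))) r := by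
  have hr0 : r ≠ 0 := (hρ₀.trans hr).ne'
  have hℓ : Real.log (r / ρ₀) ≠ 0 := (Real.log_pos ((one_lt_div hρ₀).2 hr)).ne'
  refine (Real.contDiffAt_rpow_const_of_ne hr0).mul (contDiffAt_const.sub (contDiffAt_const.mul ?_))
  exact ((contDiffAt_id.div_const ρ₀).log (div_ne_zero hr0 hρ₀.ne')).rpow_const_of_ne hℓ

end Profile

lemma neg_lap_profile {N : ℕ} {ρ₀ β κ : ℝ} (hρ₀ : 0 < ρ₀) {x : EuclideanSpace ℝ (Fin N)}
    (hx : ρ₀ < ‖x‖) :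
    -lap (fun y => ‖y‖ ^ (-((N : ℝ) - 2)) *
        (((N : ℝ) - 2) * β - κ * Real.log (‖y‖ / ρ₀) ^ (-β))) x =
      κ * ((N : ℝ) - 2) * β / (‖x‖ ^ N * Real.log (‖x‖ / ρ₀) ^ (1 + β)) +
        κ * β * (β + 1) / (‖x‖ ^ N * Real.log (‖x‖ / ρ₀) ^ (2 + β)) := by
  have hr : 0 < ‖x‖ := hρ₀.trans hx
  have hprofile : ∀ᶠ r in 𝓝 ‖x‖, HasDerivAt _ _ r := (lt_mem_nhds hx).mono fun r hr =>
    hasDerivAt_profile (c := (N : ℝ) - 2) (β := β) (κ := κ) hρ₀ hr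
  rw [lap_comp_norm (norm_pos_iff.1 hr) hprofile (hasDerivAt_profile_deriv hρ₀ hx)]
  set c : ℝ := (N : ℝ) - 2
  set ℓ := Real.log (‖x‖ / ρ₀)
  have hℓ : 0 < ℓ := Real.log_pos ((one_lt_div hρ₀).2 hx)
  have hr1 : ‖x‖ ^ (-c - 1) = ‖x‖ ^ (-c - 2) * ‖x‖ := by
    rw [← Real.rpow_add_one hr.ne']
    ring_nf
  have hrN : ‖x‖ ^ (-c - 2) = (‖x‖ ^ N)⁻¹ := by
    rw [show -c - 2 = -(N : ℝ) by ring, Real.rpow_neg hr.le, Real.rpow_natCast]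
  have hℓ1 : ℓ ^ (-β - 1) = (ℓ ^ (1 + β))⁻¹ := by
    rw [← Real.rpow_neg hℓ.le]
    ring_nf
  have hℓ2 : ℓ ^ (-β - 2) = (ℓ ^ (2 + β))⁻¹ := by
    rw [← Real.rpow_neg hℓ.le]
    ring_nf
  rw [hr1, hrN, hℓ1, hℓ2, show (N : ℝ) - 1 = c + 1 by ring]
  field_simp
  ring

lemma mul_profile_le {N : ℕ} {ρ₀ β κ r : ℝ} (hρ₀ : 0 < ρ₀) (hβ : 0 ≤ β) (hκ : 0 ≤ κ)
    (hr : ρ₀ < r) :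
    κ / (r ^ 2 * Real.log (r / ρ₀) ^ (1 + β)) *
        (r ^ (-((N : ℝ) - 2)) * (((N : ℝ) - 2) * β - κ * Real.log (r / ρ₀) ^ (-β))) ≤
      κ * ((N : ℝ) - 2) * β / (r ^ N * Real.log (r / ρ₀) ^ (1 + β)) +
        κ * β * (β + 1) / (r ^ N * Real.log (r / ρ₀) ^ (2 + β)) := by
  have hr0 : 0 < r := hρ₀.trans hr
  set ℓ := Real.log (r / ρ₀)
  have hℓ : 0 < ℓ := Real.log_pos ((one_lt_div hρ₀).2 hr)
  have hrN : r ^ (-((N : ℝ) - 2)) = r ^ 2 / r ^ N := by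
    rw [Real.rpow_neg hr0.le, Real.rpow_sub hr0, Real.rpow_natCast, Real.rpow_two, inv_div]
  rw [hrN]
  calc κ / (r ^ 2 * ℓ ^ (1 + β)) * (r ^ 2 / r ^ N * (((N : ℝ) - 2) * β - κ * ℓ ^ (-β)))
      ≤ κ / (r ^ 2 * ℓ ^ (1 + β)) * (r ^ 2 / r ^ N * (((N : ℝ) - 2) * β)) := by
        gcongr
        linarith [mul_nonneg hκ (Real.rpow_nonneg hℓ.le (-β))]
    _ = κ * ((N : ℝ) - 2) * β / (r ^ N * ℓ ^ (1 + β)) := by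
        field_simp
    _ ≤ _ := le_add_of_nonneg_right (by positivity)

theorem stmt10_general (N : ℕ)
    (ρ₀ β κ : ℝ) (hρ₀ : 0 < ρ₀) (hβ : 0 < β) (hκ : 0 < κ)
    (W : EuclideanSpace ℝ (Fin N) → ℝ)
    (hW : ∀ x : EuclideanSpace ℝ (Fin N), ρ₀ < ‖x‖ →
      W x = ‖x‖ ^ (-((N : ℝ) - 2)) *
        (((N : ℝ) - 2) * β - κ * Real.log (‖x‖ / ρ₀) ^ (-β))) :
    ContDiffOn ℝ 2 W {x : EuclideanSpace ℝ (Fin N) | ρ₀ < ‖x‖} ∧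
    (∀ x : EuclideanSpace ℝ (Fin N), ρ₀ < ‖x‖ →
      -lap W x =
        κ * ((N : ℝ) - 2) * β / (‖x‖ ^ N * Real.log (‖x‖ / ρ₀) ^ (1 + β)) +
          κ * β * (β + 1) / (‖x‖ ^ N * Real.log (‖x‖ / ρ₀) ^ (2 + β))) ∧
    (∀ (Λ : Set (EuclideanSpace ℝ (Fin N))) (ρ : ℝ), IsOpen Λ →
      Bornology.IsBounded Λ → ρ₀ < ρ → Metric.closedBall 0 ρ ⊆ Λ →
      ∀ x ∉ Λ, penalPot Λ ρ₀ β κ x * W x ≤ -lap W x) := by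
  have hW_nhds (x : EuclideanSpace ℝ (Fin N)) (hx : ρ₀ < ‖x‖) : W =ᶠ[𝓝 x] fun y =>
      ‖y‖ ^ (-((N : ℝ) - 2)) * (((N : ℝ) - 2) * β - κ * Real.log (‖y‖ / ρ₀) ^ (-β)) :=
    (continuous_norm.continuousAt.eventually (lt_mem_nhds hx)).mono hW
  have hlap (x : EuclideanSpace ℝ (Fin N)) (hx : ρ₀ < ‖x‖) := lap_congr (hW_nhds x hx) ▸
    neg_lap_profile (N := N) (β := β) (κ := κ) hρ₀ hx
  refine ⟨fun x hx => ?_, hlap, fun Λ ρ _ _ hρ hball x hxΛ => ?_⟩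
  · have hx0 : x ≠ 0 := norm_pos_iff.1 (hρ₀.trans hx)
    exact ((contDiffAt_profile hρ₀ hx).comp x (contDiffAt_norm ℝ hx0)
      |>.congr_of_eventuallyEq (hW_nhds x hx)).contDiffWithinAt
  · have hx : ρ₀ < ‖x‖ := hρ.trans (by simpa using mt (@hball x) hxΛ)
    rw [penalPot, if_neg hxΛ, hW x hx, hlap x hx]
    exact mul_profile_le hρ₀ hβ.le hκ.le hx

theorem stmt10 (N : ℕ) (hN : 3 ≤ N)
    (ρ₀ β κ : ℝ) (hρ₀ : 0 < ρ₀) (hβ : 0 < β) (hκ : 0 < κ)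
    (W : EuclideanSpace ℝ (Fin N) → ℝ)
    (hW : ∀ x : EuclideanSpace ℝ (Fin N), ρ₀ < ‖x‖ →
      W x = ‖x‖ ^ (-((N : ℝ) - 2)) *
        (((N : ℝ) - 2) * β - κ * Real.log (‖x‖ / ρ₀) ^ (-β))) :
    ContDiffOn ℝ 2 W {x : EuclideanSpace ℝ (Fin N) | ρ₀ < ‖x‖} ∧
    (∀ x : EuclideanSpace ℝ (Fin N), ρ₀ < ‖x‖ →
      -lap W x =
        κ * ((N : ℝ) - 2) * β / (‖x‖ ^ N * Real.log (‖x‖ / ρ₀) ^ (1 + β)) +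
          κ * β * (β + 1) / (‖x‖ ^ N * Real.log (‖x‖ / ρ₀) ^ (2 + β))) ∧
    (∀ (Λ : Set (EuclideanSpace ℝ (Fin N))) (ρ : ℝ), IsOpen Λ →
      Bornology.IsBounded Λ → ρ₀ < ρ → Metric.closedBall 0 ρ ⊆ Λ →
      ∀ x ∉ Λ, penalPot Λ ρ₀ β κ x * W x ≤ -lap W x) :=
  stmt10_general N ρ₀ β κ hρ₀ hβ hκ W hW
end

section
/- Let ρ₀ > 0 and ρ > ρ₀. Then there exists a constant C > 0 such that for every smooth compactly supported function u : ℝ² → ℝ one has ∫_{ℝ²} |∇u(x)|² dx + C ∫_{{ρ₀ < |x| < ρ}} |u(x)|² dx ≥ (1/4) ∫_{{|x| > ρ}} |u(x)|² / (|x|² (log(|x|/ρ₀))²) dx. -/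
open MeasureTheory Metric Set Filter
open scoped RealInnerProductSpace Topology

/-!
Integrating by parts, `∫ 2u ⟪∇u, V⟫ = -∫ u² div V` for any C¹ vector field `V`, so expanding
`‖∇u + u V‖² ≥ 0` gives `∫ ‖∇u‖² ≥ ∫ u² (div V - ‖V‖²)`. In the plane the field
`V x = -x / (2 ‖x‖² log (‖x‖ / ρ₀))` has `div V - ‖V‖² = 1 / (4 ‖x‖² log² (‖x‖ / ρ₀))`. Cutting it
off smoothly between two radii `ρ₀ < ρ₁ < ρ₂ < ρ` keeps this identity for `‖x‖ > ρ₂`, makes the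
defect vanish for `‖x‖ < ρ₁`, and leaves a continuous defect which is bounded below by some `-C`
on the annulus.
-/

noncomputable section

section Divergence

variable {E : Type*} [NormedAddCommGroup E] [InnerProductSpace ℝ E]

def divergence (V : E → E) (x : E) : ℝ :=
  LinearMap.trace ℝ E (fderiv ℝ V x)

theorem divergence_eq_sum_inner {ι : Type*} [Fintype ι] (b : OrthonormalBasis ι ℝ E)
    (V : E → E) (x : E) :
    divergence V x = ∑ i, ⟪b i, fderiv ℝ V x (b i)⟫ :=
  LinearMap.trace_eq_sum_inner _ b

variable [FiniteDimensional ℝ E]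

theorem continuous_divergence {V : E → E} (hV : ContDiff ℝ 1 V) : Continuous (divergence V) := by
  have hV' := hV.continuous_fderiv one_ne_zero
  simp_rw [funext (divergence_eq_sum_inner (stdOrthonormalBasis ℝ E) V)]
  fun_prop

theorem divergence_comp_norm_sq_smul {g : ℝ → ℝ} {x : E}
    (hg : DifferentiableAt ℝ g (‖x‖ ^ 2)) :
    divergence (fun y => g (‖y‖ ^ 2) • y) x =
      Module.finrank ℝ E * g (‖x‖ ^ 2) + 2 * ‖x‖ ^ 2 * deriv g (‖x‖ ^ 2) := by
  have h : HasFDerivAt (fun y => g (‖y‖ ^ 2) • y) _ x :=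
    (hg.hasDerivAt.comp_hasFDerivAt x (hasStrictFDerivAt_norm_sq x).hasFDerivAt).smul
      (hasFDerivAt_id x)
  rw [divergence, h.fderiv]
  simp only [ContinuousLinearMap.toLinearMap_add, ContinuousLinearMap.toLinearMap_smul, map_add,
    map_smul, ContinuousLinearMap.coe_id, LinearMap.trace_id]
  set L : E →L[ℝ] ℝ := deriv g (‖x‖ ^ 2) • 2 • innerSL ℝ x
  rw [show ((L.smulRight x : E →L[ℝ] E) : E →ₗ[ℝ] E) = (L : E →ₗ[ℝ] ℝ).smulRight x from rfl,
    LinearMap.trace_smulRight]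
  simp [L]
  ring

end Divergence

section VectorFieldHardy

variable {E : Type*} [NormedAddCommGroup E] [InnerProductSpace ℝ E] [FiniteDimensional ℝ E]
  [MeasurableSpace E] [BorelSpace E] {μ : Measure E} [μ.IsAddHaarMeasure]

theorem integral_mul_divergence {f : E → ℝ} {V : E → E} (hf : ContDiff ℝ 1 f)
    (hfs : HasCompactSupport f) (hV : ContDiff ℝ 1 V) :
    ∫ x, f x * divergence V x ∂μ = -∫ x, fderiv ℝ f x (V x) ∂μ := by
  let b := stdOrthonormalBasis ℝ E
  have hfderiv : Continuous (fderiv ℝ f) := hf.continuous_fderiv one_ne_zero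
  have hVderiv : Continuous (fderiv ℝ V) := hV.continuous_fderiv one_ne_zero
  have hcoord (i) (x : E) :
      fderiv ℝ (fun y => ⟪b i, V y⟫) x (b i) = ⟪b i, fderiv ℝ V x (b i)⟫ := by
    simp [fderiv_inner_apply ℝ (differentiableAt_const _) (hV.differentiable one_ne_zero x)]
  have hint (i) : Integrable (fun x => f x * fderiv ℝ (fun y => ⟪b i, V y⟫) x (b i)) μ := by
    simp_rw [hcoord]
    exact (by fun_prop : Continuous _).integrable_of_hasCompactSupport hfs.mul_right
  have hint' (i) : Integrable (fun x => fderiv ℝ f x (b i) * ⟪b i, V x⟫) μ :=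
    (by fun_prop : Continuous _).integrable_of_hasCompactSupport
      (hfs.fderiv_apply ℝ (b i)).mul_right
  have hibp (i) : ∫ x, f x * fderiv ℝ (fun y => ⟪b i, V y⟫) x (b i) ∂μ
      = -∫ x, fderiv ℝ f x (b i) * ⟪b i, V x⟫ ∂μ :=
    integral_mul_fderiv_eq_neg_fderiv_mul_of_integrable (hint' i) (hint i)
      ((by fun_prop : Continuous _).integrable_of_hasCompactSupport hfs.mul_right)
      (fun x _ => hf.differentiable one_ne_zero x)
      (fun x _ => (contDiff_const.inner ℝ hV).differentiable one_ne_zero x)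
  have hrepr (x : E) : ∑ i, fderiv ℝ f x (b i) * ⟪b i, V x⟫ = fderiv ℝ f x (V x) := by
    conv_rhs => rw [← b.sum_repr' (V x)]
    simp [mul_comm]
  calc ∫ x, f x * divergence V x ∂μ
      = ∑ i, ∫ x, f x * fderiv ℝ (fun y => ⟪b i, V y⟫) x (b i) ∂μ := by
        rw [← integral_finsetSum _ fun i _ => hint i]
        simp_rw [divergence_eq_sum_inner b, Finset.mul_sum, hcoord]
    _ = -∫ x, fderiv ℝ f x (V x) ∂μ := by
        simp_rw [hibp, Finset.sum_neg_distrib, ← integral_finsetSum _ fun i _ => hint' i, hrepr]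

theorem integral_sq_mul_divergence_sub_norm_sq_le {u : E → ℝ} {V : E → E} (hu : ContDiff ℝ 1 u)
    (hus : HasCompactSupport u) (hV : ContDiff ℝ 1 V) :
    ∫ x, u x ^ 2 * (divergence V x - ‖V x‖ ^ 2) ∂μ ≤ ∫ x, ‖gradient u x‖ ^ 2 ∂μ := by
  have hu2 : HasCompactSupport (fun x => u x ^ 2) :=
    hus.comp_left (g := fun t : ℝ => t ^ 2) (zero_pow two_ne_zero)
  have hderiv (x : E) :
      fderiv ℝ (fun y => u y ^ 2) x (V x) = 2 * u x * ⟪gradient u x, V x⟫ := by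
    rw [inner_gradient_left, fderiv_fun_pow 2 (hu.differentiable one_ne_zero x)]
    simp
  have hgrad : Continuous (gradient u) :=
    (InnerProductSpace.toDual ℝ E).symm.continuous.comp (hu.continuous_fderiv one_ne_zero)
  have hdiv : Continuous (divergence V) := continuous_divergence hV
  have hpointwise (x : E) :
      -(2 * u x * ⟪gradient u x, V x⟫) - u x ^ 2 * ‖V x‖ ^ 2 ≤ ‖gradient u x‖ ^ 2 := by
    have := norm_add_sq_real (gradient u x) (u x • V x)
    rw [inner_smul_right, norm_smul, mul_pow, Real.norm_eq_abs, sq_abs] at this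
    nlinarith [sq_nonneg ‖gradient u x + u x • V x‖]
  have hint₁ : Integrable (fun x => u x ^ 2 * divergence V x) μ :=
    (by fun_prop : Continuous _).integrable_of_hasCompactSupport hu2.mul_right
  have hint₂ : Integrable (fun x => u x ^ 2 * ‖V x‖ ^ 2) μ :=
    (by fun_prop : Continuous _).integrable_of_hasCompactSupport hu2.mul_right
  have hint₃ : Integrable (fun x => 2 * u x * ⟪gradient u x, V x⟫) μ :=
    (by fun_prop : Continuous _).integrable_of_hasCompactSupport hus.mul_left.mul_right
  have hint₄ : Integrable (fun x => ‖gradient u x‖ ^ 2) μ :=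
    (by fun_prop : Continuous _).integrable_of_hasCompactSupport
      ((hus.fderiv ℝ).comp_left (g := fun L => ‖(InnerProductSpace.toDual ℝ E).symm L‖ ^ 2)
        (by simp))
  calc ∫ x, u x ^ 2 * (divergence V x - ‖V x‖ ^ 2) ∂μ
      = ∫ x, -(2 * u x * ⟪gradient u x, V x⟫) - u x ^ 2 * ‖V x‖ ^ 2 ∂μ := by
        simp_rw [mul_sub]
        rw [integral_sub hint₁ hint₂, integral_sub hint₃.fun_neg hint₂, integral_neg,
          integral_mul_divergence (hu.pow 2) hu2 hV]
        simp_rw [hderiv]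
    _ ≤ ∫ x, ‖gradient u x‖ ^ 2 ∂μ := integral_mono (hint₃.neg.sub hint₂) hint₄ hpointwise

theorem setIntegral_sq_mul_divergence_sub_norm_sq_le {u : E → ℝ} {V : E → E}
    (hu : ContDiff ℝ 1 u) (hus : HasCompactSupport u) (hV : ContDiff ℝ 1 V) {S A : Set E}
    (hS : MeasurableSet S) (hA : MeasurableSet A) {M : ℝ} (hM : 0 ≤ M)
    (hDA : ∀ x ∈ A, -M ≤ divergence V x - ‖V x‖ ^ 2)
    (hD : ∀ x ∉ S ∪ A, 0 ≤ divergence V x - ‖V x‖ ^ 2) :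
    ∫ x in S, u x ^ 2 * (divergence V x - ‖V x‖ ^ 2) ∂μ ≤
      ∫ x, ‖gradient u x‖ ^ 2 ∂μ + M * ∫ x in A, u x ^ 2 ∂μ := by
  set f : E → ℝ := fun x => u x ^ 2 * (divergence V x - ‖V x‖ ^ 2)
  have hu2 : HasCompactSupport (fun x => u x ^ 2) :=
    hus.comp_left (g := fun t : ℝ => t ^ 2) (zero_pow two_ne_zero)
  have hdiv : Continuous (divergence V) := continuous_divergence hV
  have hf : Integrable f μ :=
    (by fun_prop : Continuous f).integrable_of_hasCompactSupport hu2.mul_right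
  have hu2int : Integrable (fun x => u x ^ 2) μ :=
    (by fun_prop : Continuous _).integrable_of_hasCompactSupport hu2
  have hpointwise (x : E) : S.indicator f x - M * A.indicator (fun x => u x ^ 2) x ≤ f x := by
    have := sq_nonneg (u x)
    by_cases hxS : x ∈ S <;> by_cases hxA : x ∈ A <;>
      simp only [indicator_of_mem, indicator_of_notMem, hxS, hxA, not_false_eq_true, f]
    · nlinarith
    · nlinarith
    · nlinarith [hDA x hxA]
    · nlinarith [hD x (by simp [hxS, hxA])]
  calc ∫ x in S, f x ∂μ
      = ∫ x, S.indicator f x - M * A.indicator (fun x => u x ^ 2) x ∂μ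
          + M * ∫ x in A, u x ^ 2 ∂μ := by
        rw [integral_sub (hf.indicator hS) ((hu2int.indicator hA).const_mul M), integral_const_mul,
          integral_indicator hS, integral_indicator hA]
        ring
    _ ≤ ∫ x, f x ∂μ + M * ∫ x in A, u x ^ 2 ∂μ :=
        add_le_add_left (integral_mono
          ((hf.indicator hS).sub ((hu2int.indicator hA).const_mul M)) hf hpointwise) _
    _ ≤ ∫ x, ‖gradient u x‖ ^ 2 ∂μ + M * ∫ x in A, u x ^ 2 ∂μ :=
        add_le_add_left (integral_sq_mul_divergence_sub_norm_sq_le hu hus hV) _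

end VectorFieldHardy

section LogHardyProfile

def logHardyProfile (c a b s : ℝ) : ℝ :=
  -(Real.smoothTransition ((s - a) / (b - a)) / (s * Real.log (s / c)))

theorem logHardyProfile_of_le (c : ℝ) {a b s : ℝ} (hab : a < b) (hs : s ≤ a) :
    logHardyProfile c a b s = 0 := by
  rw [logHardyProfile, Real.smoothTransition.zero_of_nonpos
    (div_nonpos_of_nonpos_of_nonneg (by linarith) (by linarith)), zero_div, neg_zero]

theorem logHardyProfile_of_ge (c : ℝ) {a b s : ℝ} (hab : a < b) (hs : b ≤ s) :
    logHardyProfile c a b s = -(s * Real.log (s / c))⁻¹ := by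
  rw [logHardyProfile,
    Real.smoothTransition.one_of_one_le ((one_le_div (by linarith)).2 (by linarith)), one_div]

theorem logHardyProfile_eventuallyEq_zero (c : ℝ) {a b s : ℝ} (hab : a < b) (hs : s < a) :
    logHardyProfile c a b =ᶠ[𝓝 s] 0 := by
  filter_upwards [eventually_lt_nhds hs] with t ht using logHardyProfile_of_le c hab ht.le

theorem mul_log_div_ne_zero {c s : ℝ} (hc : 0 < c) (hcs : c < s) : s * Real.log (s / c) ≠ 0 :=
  mul_ne_zero (hc.trans hcs).ne' (Real.log_pos ((one_lt_div hc).2 hcs)).ne'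

theorem hasDerivAt_mul_log_div {c s : ℝ} (hc : 0 < c) (hs : 0 < s) :
    HasDerivAt (fun t => t * Real.log (t / c)) (Real.log (s / c) + 1) s := by
  refine ((hasDerivAt_id' s).fun_mul
    (((hasDerivAt_id' s).div_const c).log (div_pos hs hc).ne')).congr_deriv ?_
  field_simp

theorem contDiff_logHardyProfile {n : ℕ∞} {c a b : ℝ} (hc : 0 < c) (hca : c < a) (hab : a < b) :
    ContDiff ℝ n (logHardyProfile c a b) := by
  refine contDiff_iff_contDiffAt.2 fun s => ?_
  rcases lt_or_ge s a with hs | hs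
  · exact contDiffAt_const.congr_of_eventuallyEq (logHardyProfile_eventuallyEq_zero c hab hs)
  · have hcs : c < s := hca.trans_le hs
    have hlog : ContDiffAt ℝ n (fun t => Real.log (t / c)) s :=
      (Real.contDiffAt_log.2 (div_pos (hc.trans hcs) hc).ne').comp s (contDiffAt_id.div_const c)
    exact ((Real.smoothTransition.contDiff.comp
      ((contDiff_id.sub contDiff_const).div_const _)).contDiffAt.div
      (contDiffAt_id.mul hlog) (mul_log_div_ne_zero hc hcs)).neg

theorem hasDerivAt_logHardyProfile_of_gt {c a b s : ℝ} (hc : 0 < c) (hab : a < b)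
    (hcs : c < s) (hbs : b < s) :
    HasDerivAt (logHardyProfile c a b)
      ((Real.log (s / c) + 1) / (s * Real.log (s / c)) ^ 2) s := by
  have hψ := ((hasDerivAt_mul_log_div hc (hc.trans hcs)).inv (mul_log_div_ne_zero hc hcs)).neg
  rw [neg_div, neg_neg] at hψ
  refine hψ.congr_of_eventuallyEq ?_
  filter_upwards [eventually_gt_nhds hbs] with t ht using logHardyProfile_of_ge c hab ht.le

end LogHardyProfile

section LogHardyField

variable {E : Type*} [NormedAddCommGroup E] [InnerProductSpace ℝ E]

/-- Zero for `‖x‖ ≤ r₁` and `-x / (‖x‖² log (‖x‖² / r₀²))` for `‖x‖ ≥ r₂`. -/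
def logHardyField (r₀ r₁ r₂ : ℝ) (x : E) : E :=
  logHardyProfile (r₀ ^ 2) (r₁ ^ 2) (r₂ ^ 2) (‖x‖ ^ 2) • x

theorem contDiff_logHardyField {n : ℕ∞} {r₀ r₁ r₂ : ℝ} (h₀ : 0 < r₀) (h₀₁ : r₀ < r₁)
    (h₁₂ : r₁ < r₂) : ContDiff ℝ n (logHardyField (E := E) r₀ r₁ r₂) :=
  ((contDiff_logHardyProfile (by positivity) (by nlinarith) (by nlinarith)).comp
    (contDiff_norm_sq ℝ)).smul contDiff_id

variable [FiniteDimensional ℝ E]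

theorem divergence_sub_norm_sq_logHardyField_of_lt {r₀ r₁ r₂ : ℝ} (h₀ : 0 < r₀)
    (h₀₁ : r₀ < r₁) (h₁₂ : r₁ < r₂) {x : E} (hx : ‖x‖ < r₁) :
    divergence (logHardyField r₀ r₁ r₂) x - ‖logHardyField r₀ r₁ r₂ x‖ ^ 2 = 0 := by
  have hzero := logHardyProfile_eventuallyEq_zero (r₀ ^ 2) (a := r₁ ^ 2) (b := r₂ ^ 2)
    (by nlinarith) (s := ‖x‖ ^ 2) (by nlinarith [norm_nonneg x])
  unfold logHardyField
  rw [divergence_comp_norm_sq_smul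
    (differentiableAt_const (0 : ℝ) |>.congr_of_eventuallyEq hzero), hzero.deriv_eq,
    hzero.eq_of_nhds]
  simp

theorem divergence_sub_norm_sq_logHardyField_of_gt (hE : Module.finrank ℝ E = 2) {r₀ r₁ r₂ : ℝ}
    (h₀ : 0 < r₀) (h₀₁ : r₀ < r₁) (h₁₂ : r₁ < r₂) {x : E} (hx : r₂ < ‖x‖) :
    divergence (logHardyField r₀ r₁ r₂) x - ‖logHardyField r₀ r₁ r₂ x‖ ^ 2 =
      (4 * ‖x‖ ^ 2 * Real.log (‖x‖ / r₀) ^ 2)⁻¹ := by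
  have hderiv := hasDerivAt_logHardyProfile_of_gt (a := r₁ ^ 2) (b := r₂ ^ 2) (s := ‖x‖ ^ 2)
    (sq_pos_of_pos h₀) (by nlinarith) (by nlinarith) (by nlinarith)
  have hlog : Real.log (‖x‖ ^ 2 / r₀ ^ 2) = 2 * Real.log (‖x‖ / r₀) := by
    rw [← div_pow, Real.log_pow]; push_cast; ring
  unfold logHardyField
  rw [divergence_comp_norm_sq_smul hderiv.differentiableAt, hderiv.deriv,
    logHardyProfile_of_ge _ (by nlinarith) (by nlinarith), norm_smul, Real.norm_eq_abs, hE, hlog]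
  simp only [mul_pow, sq_abs]
  field_simp
  ring

end LogHardyField

end

theorem stmt11 (ρ₀ ρ : ℝ) (hρ₀ : 0 < ρ₀) (hρ : ρ₀ < ρ) :
    ∃ C > (0 : ℝ), ∀ u : EuclideanSpace ℝ (Fin 2) → ℝ,
      ContDiff ℝ (⊤ : ℕ∞) u → HasCompactSupport u →
      (1 / 4) * ∫ x in {x : EuclideanSpace ℝ (Fin 2) | ρ < ‖x‖},
          u x ^ 2 / (‖x‖ ^ 2 * Real.log (‖x‖ / ρ₀) ^ 2) ≤
        (∫ x, ‖gradient u x‖ ^ 2) +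
          C * ∫ x in {x : EuclideanSpace ℝ (Fin 2) | ρ₀ < ‖x‖ ∧ ‖x‖ < ρ}, u x ^ 2 := by
  obtain ⟨ρ₁, h₀₁, h₁ρ⟩ := exists_between hρ
  obtain ⟨ρ₂, h₁₂, h₂ρ⟩ := exists_between h₁ρ
  set V := logHardyField (E := EuclideanSpace ℝ (Fin 2)) ρ₀ ρ₁ ρ₂
  have hV : ContDiff ℝ 1 V := contDiff_logHardyField hρ₀ h₀₁ h₁₂
  have hE : Module.finrank ℝ (EuclideanSpace ℝ (Fin 2)) = 2 := finrank_euclideanSpace_fin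
  have hD : Continuous fun x => divergence V x - ‖V x‖ ^ 2 :=
    (continuous_divergence hV).sub (hV.continuous.norm.pow 2)
  obtain ⟨M, hM⟩ := (isCompact_closedBall 0 ρ).bddBelow_image hD.continuousOn
  refine ⟨max (-M) 1, by positivity, fun u hu hus => ?_⟩
  have houter : ∀ x ∈ {x : EuclideanSpace ℝ (Fin 2) | ρ < ‖x‖},
      1 / 4 * (u x ^ 2 / (‖x‖ ^ 2 * Real.log (‖x‖ / ρ₀) ^ 2)) =
        u x ^ 2 * (divergence V x - ‖V x‖ ^ 2) := fun x hx => by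
    rw [divergence_sub_norm_sq_logHardyField_of_gt hE hρ₀ h₀₁ h₁₂ (h₂ρ.trans hx)]
    field_simp
  rw [← integral_const_mul, setIntegral_congr_fun (by measurability) houter]
  refine setIntegral_sq_mul_divergence_sub_norm_sq_le (hu.of_le (by exact_mod_cast le_top)) hus hV
    (by measurability) (by measurability) (by positivity) (fun x hx => ?_) (fun x hx => ?_)
  · linarith [hM ⟨x, mem_closedBall_zero_iff.2 hx.2.le, rfl⟩, le_max_left (-M) 1]
  · simp only [mem_union, mem_ofPred_eq, not_or, not_and, not_lt] at hx
    rcases le_or_gt ‖x‖ ρ₀ with h | h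
    · rw [divergence_sub_norm_sq_logHardyField_of_lt hρ₀ h₀₁ h₁₂ (h.trans_lt h₀₁)]
    · rw [divergence_sub_norm_sq_logHardyField_of_gt hE hρ₀ h₀₁ h₁₂ (by linarith [hx.2 h])]
      positivity
end

section
/- Let N ≥ 1 and let W : ℝ^N → ℝ be of class C² with W(x) > 0 for every x. Then for every smooth compactly supported function u : ℝ^N → ℝ one has the identity ∫_{ℝ^N} |∇u(x)|² dx = ∫_{ℝ^N} (−ΔW(x)/W(x)) |u(x)|² dx + ∫_{ℝ^N} |∇(u/W)(x)|² W(x)² dx. In particular, if −ΔW ≥ 0 pointwise then ∫ |∇u|² ≥ ∫ (−ΔW/W)|u|². -/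
/-!
Write `u = v W` with `v = u / W`. The product rule gives, pointwise,
`|∇u|² = W² |∇v|² + ⟪∇(v² W), ∇W⟫`, and `v² W = u² / W` is `C¹` with compact support, so
integrating by parts turns the integral of the last term into `-∫ (u² / W) ΔW`.
The inequality follows since the remaining term `∫ |∇v|² W²` is nonnegative.
-/

open MeasureTheory Metric Set Filter
open scoped RealInnerProductSpace Topology ENNReal

section IntegrationByParts

variable {E : Type*} [NormedAddCommGroup E] [NormedSpace ℝ E] [FiniteDimensional ℝ E]
  [MeasurableSpace E] [BorelSpace E]
  {μ : Measure E} [μ.IsAddHaarMeasure]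

theorem integral_fderiv_mul_eq_neg_mul_fderiv {f g : E → ℝ} (hf : ContDiff ℝ 1 f)
    (hfs : HasCompactSupport f) (hg : ContDiff ℝ 1 g) (v : E) :
    ∫ x, fderiv ℝ f x v * g x ∂μ = -∫ x, f x * fderiv ℝ g x v ∂μ := by
  have hf' : Continuous (fderiv ℝ f · v) :=
    (hf.continuous_fderiv one_ne_zero).clm_apply continuous_const
  have hg' : Continuous (fderiv ℝ g · v) :=
    (hg.continuous_fderiv one_ne_zero).clm_apply continuous_const
  rw [integral_mul_fderiv_eq_neg_fderiv_mul_of_integrable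
    ((hf'.mul hg.continuous).integrable_of_hasCompactSupport (hfs.fderiv_apply ℝ v).mul_right)
    ((hf.continuous.mul hg').integrable_of_hasCompactSupport hfs.mul_right)
    ((hf.continuous.mul hg.continuous).integrable_of_hasCompactSupport hfs.mul_right)
    (fun x _ => hf.differentiable one_ne_zero x) (fun x _ => hg.differentiable one_ne_zero x),
    neg_neg]

end IntegrationByParts

section Gradient

variable {F : Type*} [NormedAddCommGroup F] [InnerProductSpace ℝ F] [CompleteSpace F]

open InnerProductSpace

theorem gradient_mul {v w : F → ℝ} {x : F} (hv : DifferentiableAt ℝ v x)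
    (hw : DifferentiableAt ℝ w x) :
    gradient (fun y => v y * w y) x = v x • gradient w x + w x • gradient v x := by
  simp only [gradient, fderiv_fun_mul hv hw, map_add, map_smul]

theorem norm_gradient_mul_sq {v w : F → ℝ} {x : F} (hv : DifferentiableAt ℝ v x)
    (hw : DifferentiableAt ℝ w x) :
    ‖gradient (fun y => v y * w y) x‖ ^ 2 =
      ‖gradient v x‖ ^ 2 * w x ^ 2 + ⟪gradient (fun y => v y ^ 2 * w y) x, gradient w x⟫ := by
  have hsq : (fun y => v y ^ 2 * w y) = fun y => v y * (v y * w y) := by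
    funext y; ring
  rw [hsq, gradient_mul (w := fun y => v y * w y) hv (hv.mul hw), gradient_mul hv hw,
    norm_add_sq_real, norm_smul, norm_smul]
  simp only [inner_add_left, real_inner_smul_left, real_inner_smul_right,
    real_inner_self_eq_norm_sq, real_inner_comm (gradient v x), Real.norm_eq_abs, mul_pow, sq_abs]
  ring

theorem norm_gradient_sq_eq_of_ne_zero {u w : F → ℝ} {x : F} (hu : DifferentiableAt ℝ u x)
    (hw : DifferentiableAt ℝ w x) (hw0 : ∀ y, w y ≠ 0) :
    ‖gradient u x‖ ^ 2 = ‖gradient (fun y => u y / w y) x‖ ^ 2 * w x ^ 2 +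
      ⟪gradient (fun y => u y ^ 2 / w y) x, gradient w x⟫ := by
  have hu_eq : (fun y => u y / w y * w y) = u := funext fun y => div_mul_cancel₀ _ (hw0 y)
  have hf_eq : (fun y => (u y / w y) ^ 2 * w y) = fun y => u y ^ 2 / w y := funext fun y => by
    field_simp [hw0 y]
  have hdiv : DifferentiableAt ℝ (fun y => u y / w y) x := by
    simp only [div_eq_mul_inv]
    exact hu.mul (hw.inv (hw0 x))
  have := norm_gradient_mul_sq hdiv hw
  rwa [hu_eq, hf_eq] at this

theorem HasCompactSupport.gradient {f : F → ℝ} (hf : HasCompactSupport f) :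
    HasCompactSupport (gradient f) :=
  hf.fderiv ℝ |>.comp_left (g := (toDual ℝ F).symm) (map_zero _)

theorem ContDiff.continuous_gradient {f : F → ℝ} (hf : ContDiff ℝ 1 f) :
    Continuous (gradient f) :=
  (toDual ℝ F).symm.continuous.comp (hf.continuous_fderiv one_ne_zero)

end Gradient

section Euclidean

variable {ι : Type*} [Fintype ι] [DecidableEq ι]

theorem gradient_apply_eq_fderiv_single (f : EuclideanSpace ℝ ι → ℝ) (x : EuclideanSpace ℝ ι)
    (i : ι) : gradient f x i = fderiv ℝ f x (EuclideanSpace.single i 1) := by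
  rw [← inner_gradient_left, EuclideanSpace.inner_single_right, one_mul, conj_trivial]

theorem inner_gradient_eq_sum (f g : EuclideanSpace ℝ ι → ℝ) (x : EuclideanSpace ℝ ι) :
    ⟪gradient f x, gradient g x⟫ = ∑ i, fderiv ℝ f x (EuclideanSpace.single i 1) *
      fderiv ℝ g x (EuclideanSpace.single i 1) := by
  rw [PiLp.inner_apply]
  simp only [gradient_apply_eq_fderiv_single, RCLike.inner_apply, conj_trivial, mul_comm]

end Euclidean

section Laplacian

variable {N : ℕ}

local notation "𝔼" => EuclideanSpace ℝ (Fin N)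

theorem lap_eq_sum_fderiv_fderiv {W : 𝔼 → ℝ} (hW : ContDiff ℝ 2 W) (x : 𝔼) :
    lap W x = ∑ i, fderiv ℝ (fun y => fderiv ℝ W y (EuclideanSpace.single i 1)) x
      (EuclideanSpace.single i 1) := by
  refine Finset.sum_congr rfl fun i _ => ?_
  have hd : DifferentiableAt ℝ (fderiv ℝ W) x :=
    (hW.fderiv_right (m := 1) le_rfl).differentiable one_ne_zero x
  rw [iteratedFDeriv_two_apply, fderiv_clm_apply hd (differentiableAt_const _)]
  simp

theorem integral_inner_gradient_eq_neg_integral_mul_lap {f W : 𝔼 → ℝ} (hf : ContDiff ℝ 1 f)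
    (hfs : HasCompactSupport f) (hW : ContDiff ℝ 2 W) :
    ∫ x, ⟪gradient f x, gradient W x⟫ = -∫ x, f x * lap W x := by
  have hWi : ∀ i : Fin N, ContDiff ℝ 1 (fun y => fderiv ℝ W y (EuclideanSpace.single i 1)) :=
    fun i => (hW.fderiv_right (m := 1) le_rfl).clm_apply contDiff_const
  have hcont : ∀ {g : 𝔼 → ℝ}, ContDiff ℝ 1 g → ∀ v, Continuous (fderiv ℝ g · v) :=
    fun hg _ => (hg.continuous_fderiv one_ne_zero).clm_apply continuous_const
  simp only [inner_gradient_eq_sum, lap_eq_sum_fderiv_fderiv hW, Finset.mul_sum]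
  rw [integral_finsetSum, integral_finsetSum, ← Finset.sum_neg_distrib]
  · exact Finset.sum_congr rfl fun i _ =>
      integral_fderiv_mul_eq_neg_mul_fderiv hf hfs (hWi i) _
  · exact fun i _ => (hf.continuous.mul (hcont (hWi i) _)).integrable_of_hasCompactSupport
      hfs.mul_right
  · exact fun i _ => ((hcont hf _).mul (hWi i).continuous).integrable_of_hasCompactSupport
      (hfs.fderiv_apply ℝ _).mul_right

theorem integral_norm_gradient_sq_eq_ground_state {W u : 𝔼 → ℝ}
    (hW : ContDiff ℝ 2 W) (hW0 : ∀ x, W x ≠ 0) (hu : ContDiff ℝ 1 u) (hus : HasCompactSupport u) :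
    ∫ x, ‖gradient u x‖ ^ 2 =
      (∫ x, (-lap W x / W x) * u x ^ 2) + ∫ x, ‖gradient (fun y => u y / W y) x‖ ^ 2 * W x ^ 2 := by
  set v := fun y => u y / W y
  set f := fun y => u y ^ 2 / W y
  have hW1 : ContDiff ℝ 1 W := hW.of_le (by norm_num)
  have hv : ContDiff ℝ 1 v := hu.div hW1 hW0
  have hf : ContDiff ℝ 1 f := (hu.pow 2).div hW1 hW0
  have hvs : HasCompactSupport v := hus.mono fun x hx h => hx (by simp [v, h])
  have hfs : HasCompactSupport f := hus.mono fun x hx h => hx (by simp [f, h])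
  have pointwise : ∀ x, ‖gradient u x‖ ^ 2 =
      ‖gradient v x‖ ^ 2 * W x ^ 2 + ⟪gradient f x, gradient W x⟫ := fun x =>
    norm_gradient_sq_eq_of_ne_zero (hu.differentiable one_ne_zero x)
      (hW1.differentiable one_ne_zero x) hW0
  have hI1 : Integrable (fun x => ‖gradient v x‖ ^ 2 * W x ^ 2) :=
    ((hv.continuous_gradient.norm.pow 2).mul (hW.continuous.pow 2)).integrable_of_hasCompactSupport
      (hvs.gradient.mono fun x hx h => hx (by simp [h]))
  have hI2 : Integrable (fun x => ⟪gradient f x, gradient W x⟫) :=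
    (hf.continuous_gradient.inner hW1.continuous_gradient).integrable_of_hasCompactSupport
      (hfs.gradient.mono fun x hx h => hx (by simp [h]))
  calc ∫ x, ‖gradient u x‖ ^ 2
      = ∫ x, (‖gradient v x‖ ^ 2 * W x ^ 2 + ⟪gradient f x, gradient W x⟫) := by
        simp only [pointwise]
    _ = (∫ x, ‖gradient v x‖ ^ 2 * W x ^ 2) + -∫ x, f x * lap W x := by
        rw [integral_add hI1 hI2, integral_inner_gradient_eq_neg_integral_mul_lap hf hfs hW]
    _ = (∫ x, (-lap W x / W x) * u x ^ 2) + ∫ x, ‖gradient v x‖ ^ 2 * W x ^ 2 := by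
        rw [← integral_neg, add_comm]
        congr 2 with x
        simp only [f]
        ring

end Laplacian

theorem stmt14_general (N : ℕ)
    (W : EuclideanSpace ℝ (Fin N) → ℝ) (hW : ContDiff ℝ 2 W) (hWpos : ∀ x, 0 < W x) :
    (∀ u : EuclideanSpace ℝ (Fin N) → ℝ, ContDiff ℝ (⊤ : ℕ∞) u → HasCompactSupport u →
      ∫ x, ‖gradient u x‖ ^ 2 =
        (∫ x, (-lap W x / W x) * u x ^ 2) +
          ∫ x, ‖gradient (fun y => u y / W y) x‖ ^ 2 * W x ^ 2) ∧
    ((∀ x, 0 ≤ -lap W x) →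
      ∀ u : EuclideanSpace ℝ (Fin N) → ℝ, ContDiff ℝ (⊤ : ℕ∞) u → HasCompactSupport u →
        ∫ x, (-lap W x / W x) * u x ^ 2 ≤ ∫ x, ‖gradient u x‖ ^ 2) := by
  have identity : ∀ u : EuclideanSpace ℝ (Fin N) → ℝ, ContDiff ℝ (⊤ : ℕ∞) u →
      HasCompactSupport u → ∫ x, ‖gradient u x‖ ^ 2 =
        (∫ x, (-lap W x / W x) * u x ^ 2) +
          ∫ x, ‖gradient (fun y => u y / W y) x‖ ^ 2 * W x ^ 2 := fun u hu hus =>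
    integral_norm_gradient_sq_eq_ground_state hW (fun x => (hWpos x).ne')
      (hu.of_le (by exact_mod_cast le_top)) hus
  refine ⟨identity, fun _ u hu hus => ?_⟩
  rw [identity u hu hus]
  exact le_add_of_nonneg_right (integral_nonneg fun x => by positivity)

/-- Agmon--Allegretto--Piepenbrick positivity principle (ground state representation). -/
theorem stmt14 (N : ℕ) (hN : 1 ≤ N)
    (W : EuclideanSpace ℝ (Fin N) → ℝ) (hW : ContDiff ℝ 2 W) (hWpos : ∀ x, 0 < W x) :
    (∀ u : EuclideanSpace ℝ (Fin N) → ℝ, ContDiff ℝ (⊤ : ℕ∞) u → HasCompactSupport u →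
      ∫ x, ‖gradient u x‖ ^ 2 =
        (∫ x, (-lap W x / W x) * u x ^ 2) +
          ∫ x, ‖gradient (fun y => u y / W y) x‖ ^ 2 * W x ^ 2) ∧
    ((∀ x, 0 ≤ -lap W x) →
      ∀ u : EuclideanSpace ℝ (Fin N) → ℝ, ContDiff ℝ (⊤ : ℕ∞) u → HasCompactSupport u →
        ∫ x, (-lap W x / W x) * u x ^ 2 ≤ ∫ x, ‖gradient u x‖ ^ 2) :=
  stmt14_general N W hW hWpos
end
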